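/- arXiv:2011.10067 — 3 statements merged into one kernel-verified Lean document; each statement's English description precedes it below -/
import Mathlib

section
/- Let Y_0, Y_1, …, Y_n be a sequence of real random variables adapted to a filtration F_0 ⊆ F_1 ⊆ … ⊆ F_n, with |Y_{i+1} − Y_i| ≤ 1 almost surely for every i. For each i ∈ {1,…,n}, let D_i denote the event that E[Y_i − Y_{i−1} | F_{i−1}] < 0. Then for every ε > 0: Pr[Y_n ≤ Y_0 − ε] ≤ exp(−ε²/(2n)) + Pr[D_1 ∪ D_2 ∪ … ∪ D_n]. -/
/-!
Replace each increment `Y (i+1) - Y i` by zero wherever its conditional drift `E[Y (i+1) - Y i | F i]`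
is negative. The truncated increments are still bounded by `1`, now have nonnegative conditional
drift, and their sum equals `Y n - Y 0` outside `D_1 ∪ … ∪ D_n`. For such increments the convexity
bound `exp (s x) ≤ cosh s + sinh s · x` on `[-1, 1]` gives, for `s ≤ 0`, a conditional
moment-generating function at most `cosh s ≤ exp (s² / 2)`; iterating by the tower property and
applying Chernoff's bound with `s = -ε / n` controls the lower tail of the sum by
`exp (-ε² / (2n))`.
-/

open MeasureTheory ProbabilityTheory Real Finset

lemma Real.exp_mul_le_cosh_add_sinh_mul {s x : ℝ} (hx : |x| ≤ 1) :
    exp (s * x) ≤ cosh s + sinh s * x := by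
  obtain ⟨hx₁, hx₂⟩ := abs_le.mp hx
  have h := convexOn_exp.2 (Set.mem_univ s) (Set.mem_univ (-s))
    (by linarith : (0 : ℝ) ≤ (1 + x) / 2) (by linarith : (0 : ℝ) ≤ (1 - x) / 2) (by ring)
  simp only [smul_eq_mul] at h
  rw [cosh_eq, sinh_eq]
  calc exp (s * x) = exp ((1 + x) / 2 * s + (1 - x) / 2 * -s) := by ring_nf
    _ ≤ (1 + x) / 2 * exp s + (1 - x) / 2 * exp (-s) := h
    _ = _ := by ring

namespace MeasureTheory

variable {Ω : Type*} {m m0 : MeasurableSpace Ω} {μ : Measure Ω}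

lemma measurableSet_condExp_nonneg {f : Ω → ℝ} : MeasurableSet[m] {ω | 0 ≤ μ[f | m] ω} :=
  measurableSet_le measurable_const stronglyMeasurable_condExp.measurable

section FiniteMeasure

variable [IsFiniteMeasure μ]

lemma integrable_exp_mul_of_abs_le {X : Ω → ℝ} {C : ℝ} (hX : AEStronglyMeasurable X μ)
    (hC : ∀ᵐ ω ∂μ, |X ω| ≤ C) (s : ℝ) : Integrable (fun ω ↦ exp (s * X ω)) μ := by
  refine .of_bound (continuous_exp.comp_aestronglyMeasurable (hX.const_mul s)) (exp (|s| * C)) ?_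
  filter_upwards [hC] with ω hω
  rw [norm_of_nonneg (exp_pos _).le, exp_le_exp]
  calc s * X ω ≤ |s| * |X ω| := (le_abs_self _).trans (abs_mul _ _).le
    _ ≤ |s| * C := by gcongr

lemma condExp_exp_mul_le_cosh (hm : m ≤ m0) {X : Ω → ℝ} {s : ℝ} (hs : s ≤ 0)
    (hX : AEStronglyMeasurable X μ) (hX₁ : ∀ᵐ ω ∂μ, |X ω| ≤ 1) (hdrift : 0 ≤ᵐ[μ] μ[X | m]) :
    μ[fun ω ↦ exp (s * X ω) | m] ≤ᵐ[μ] fun _ ↦ cosh s := by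
  have hXi : Integrable X μ := .of_bound hX 1 (by simpa only [norm_eq_abs] using hX₁)
  have hchord := condExp_mono (m := m) (integrable_exp_mul_of_abs_le hX hX₁ s)
    ((integrable_const (cosh s)).add (hXi.smul (sinh s)))
    (by filter_upwards [hX₁] with ω hω using exp_mul_le_cosh_add_sinh_mul hω)
  have hlin := (condExp_add (m := m) (integrable_const (cosh s)) (hXi.smul (sinh s))).trans
    ((condExp_const hm (cosh s)).eventuallyEq.add (condExp_smul (m := m) (sinh s) X))
  filter_upwards [hchord, hlin, hdrift] with ω hchord hlin hdrift
  simp only [hlin, Pi.add_apply, Pi.smul_apply, smul_eq_mul] at hchord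
  have : sinh s * μ[X | m] ω ≤ 0 := mul_nonpos_of_nonpos_of_nonneg (sinh_nonpos_iff.mpr hs) hdrift
  linarith

lemma integral_mul_le_of_condExp_le (hm : m ≤ m0) {f g : Ω → ℝ} {c : ℝ}
    (hf : StronglyMeasurable[m] f) (hf₀ : 0 ≤ᵐ[μ] f) (hfi : Integrable f μ)
    (hfg : Integrable (f * g) μ) (hg : Integrable g μ) (hgc : μ[g | m] ≤ᵐ[μ] fun _ ↦ c) :
    ∫ ω, f ω * g ω ∂μ ≤ c * ∫ ω, f ω ∂μ := by
  have hpull := condExp_mul_of_stronglyMeasurable_left (m := m) hf hfg hg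
  calc ∫ ω, f ω * g ω ∂μ = ∫ ω, μ[f * g | m] ω ∂μ := (integral_condExp hm).symm
    _ = ∫ ω, f ω * μ[g | m] ω ∂μ := integral_congr_ae hpull
    _ ≤ ∫ ω, f ω * c ∂μ := by
      refine integral_mono_ae (integrable_condExp.congr hpull) (hfi.mul_const c) ?_
      filter_upwards [hf₀, hgc] with ω h₀ hc using mul_le_mul_of_nonneg_left hc h₀
    _ = c * ∫ ω, f ω ∂μ := by rw [integral_mul_const, mul_comm]

end FiniteMeasure

section Increments

variable {F : Filtration ℕ m0} {d : ℕ → Ω → ℝ} {n : ℕ}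

lemma Filtration.stronglyMeasurable_sum_range (hd : ∀ i < n, StronglyMeasurable[F (i + 1)] (d i)) :
    StronglyMeasurable[F n] fun ω ↦ ∑ i ∈ range n, d i ω :=
  Finset.stronglyMeasurable_fun_sum _ fun i hi ↦
    (hd i (mem_range.mp hi)).mono (F.mono (mem_range.mp hi))

lemma ae_abs_sum_range_le (hd : ∀ i < n, ∀ᵐ ω ∂μ, |d i ω| ≤ 1) :
    ∀ᵐ ω ∂μ, |∑ i ∈ range n, d i ω| ≤ n := by
  have hall : ∀ᵐ ω ∂μ, ∀ i ∈ range n, |d i ω| ≤ 1 :=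
    (ae_ball_iff (range n).countable_toSet).2 fun i hi ↦ hd i (mem_range.mp hi)
  filter_upwards [hall] with ω hω
  calc |∑ i ∈ range n, d i ω| ≤ ∑ i ∈ range n, |d i ω| := abs_sum_le_sum_abs _ _
    _ ≤ ∑ _i ∈ range n, (1 : ℝ) := sum_le_sum hω
    _ = n := by simp

variable [IsProbabilityMeasure μ]

lemma mgf_sum_range_le_cosh_pow (hd_meas : ∀ i < n, StronglyMeasurable[F (i + 1)] (d i))
    (hd_bdd : ∀ i < n, ∀ᵐ ω ∂μ, |d i ω| ≤ 1) (hd_drift : ∀ i < n, 0 ≤ᵐ[μ] μ[d i | F i])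
    {s : ℝ} (hs : s ≤ 0) :
    mgf (fun ω ↦ ∑ i ∈ range n, d i ω) μ s ≤ cosh s ^ n := by
  induction n with
  | zero => simp [mgf]
  | succ k ih =>
    have hS_meas := F.stronglyMeasurable_sum_range (n := k) fun i hi ↦ hd_meas i (by omega)
    have hS_bdd := ae_abs_sum_range_le (μ := μ) (n := k) fun i hi ↦ hd_bdd i (by omega)
    have hdk := (hd_meas k k.lt_succ_self).mono (F.le _)
    calc mgf (fun ω ↦ ∑ i ∈ range (k + 1), d i ω) μ s
        = ∫ ω, exp (s * ∑ i ∈ range k, d i ω) * exp (s * d k ω) ∂μ := by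
          simp only [mgf, sum_range_succ, mul_add, exp_add]
      _ ≤ cosh s * mgf (fun ω ↦ ∑ i ∈ range k, d i ω) μ s := by
          refine integral_mul_le_of_condExp_le (F.le k)
            (continuous_exp.comp_stronglyMeasurable (hS_meas.const_mul s))
            (ae_of_all _ fun ω ↦ (exp_pos _).le)
            (integrable_exp_mul_of_abs_le (hS_meas.mono (F.le k)).aestronglyMeasurable hS_bdd s)
            ?_ (integrable_exp_mul_of_abs_le hdk.aestronglyMeasurable (hd_bdd k k.lt_succ_self) s)
            (condExp_exp_mul_le_cosh (F.le k) hs hdk.aestronglyMeasurable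
              (hd_bdd k k.lt_succ_self) (hd_drift k k.lt_succ_self))
          have hS₁ := integrable_exp_mul_of_abs_le
            ((F.stronglyMeasurable_sum_range hd_meas).mono (F.le _)).aestronglyMeasurable
            (ae_abs_sum_range_le hd_bdd) s
          simp only [sum_range_succ, mul_add, exp_add] at hS₁
          exact hS₁
      _ ≤ cosh s * cosh s ^ k := by
          gcongr
          exact ih (fun i hi ↦ hd_meas i (by omega)) (fun i hi ↦ hd_bdd i (by omega))
            (fun i hi ↦ hd_drift i (by omega))
      _ = cosh s ^ (k + 1) := by ring

lemma measureReal_sum_range_le_neg_le (hd_meas : ∀ i < n, StronglyMeasurable[F (i + 1)] (d i))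
    (hd_bdd : ∀ i < n, ∀ᵐ ω ∂μ, |d i ω| ≤ 1) (hd_drift : ∀ i < n, 0 ≤ᵐ[μ] μ[d i | F i])
    {ε : ℝ} (hε : 0 ≤ ε) :
    μ.real {ω | ∑ i ∈ range n, d i ω ≤ -ε} ≤ exp (-ε ^ 2 / (2 * n)) := by
  rcases Nat.eq_zero_or_pos n with rfl | hn
  · simp -- the bound is `exp (-ε ^ 2 / 0) = 1`
  set s : ℝ := -ε / n
  have hs : s ≤ 0 := div_nonpos_of_nonpos_of_nonneg (neg_nonpos.mpr hε) n.cast_nonneg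
  have hint := integrable_exp_mul_of_abs_le
    ((F.stronglyMeasurable_sum_range hd_meas).mono (F.le _)).aestronglyMeasurable
    (ae_abs_sum_range_le hd_bdd) s
  calc μ.real {ω | ∑ i ∈ range n, d i ω ≤ -ε}
      ≤ exp (-s * -ε) * mgf (fun ω ↦ ∑ i ∈ range n, d i ω) μ s :=
        measure_le_le_exp_mul_mgf (-ε) hs hint
    _ ≤ exp (-s * -ε) * cosh s ^ n := by
        gcongr; exact mgf_sum_range_le_cosh_pow hd_meas hd_bdd hd_drift hs
    _ ≤ exp (-s * -ε) * exp (s ^ 2 / 2) ^ n := by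
        gcongr; exact cosh_le_exp_half_sq s
    _ = exp (-ε ^ 2 / (2 * n)) := by
        rw [← exp_nat_mul, ← exp_add]
        have : (n : ℝ) ≠ 0 := by positivity
        congr 1
        simp only [s]
        field_simp
        ring

end Increments

end MeasureTheory

section DriftTruncation

variable {Ω : Type*} {m0 : MeasurableSpace Ω} (μ : Measure Ω) (F : Filtration ℕ m0)
  (Y : ℕ → Ω → ℝ)

noncomputable def driftTruncatedIncrement (i : ℕ) : Ω → ℝ :=
  {ω | 0 ≤ μ[fun ω' ↦ Y (i + 1) ω' - Y i ω' | F i] ω}.indicator fun ω ↦ Y (i + 1) ω - Y i ω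

variable {μ F Y} {i : ℕ}

lemma stronglyMeasurable_driftTruncatedIncrement
    (hΔ : StronglyMeasurable[F (i + 1)] fun ω ↦ Y (i + 1) ω - Y i ω) :
    StronglyMeasurable[F (i + 1)] (driftTruncatedIncrement μ F Y i) :=
  hΔ.indicator (F.mono i.le_succ _ measurableSet_condExp_nonneg)

lemma abs_driftTruncatedIncrement_le (ω : Ω) :
    |driftTruncatedIncrement μ F Y i ω| ≤ |Y (i + 1) ω - Y i ω| :=
  norm_indicator_le_norm_self (fun ω ↦ Y (i + 1) ω - Y i ω) ω

lemma condExp_driftTruncatedIncrement_nonneg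
    (hΔ : Integrable (fun ω ↦ Y (i + 1) ω - Y i ω) μ) :
    0 ≤ᵐ[μ] μ[driftTruncatedIncrement μ F Y i | F i] := by
  filter_upwards [condExp_indicator hΔ measurableSet_condExp_nonneg] with ω hω
  rw [driftTruncatedIncrement, hω]
  exact Set.indicator_apply_nonneg id

lemma sum_range_driftTruncatedIncrement {n : ℕ} {ω : Ω}
    (hω : ∀ i < n, 0 ≤ μ[fun ω' ↦ Y (i + 1) ω' - Y i ω' | F i] ω) :
    ∑ i ∈ range n, driftTruncatedIncrement μ F Y i ω = Y n ω - Y 0 ω := by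
  rw [← sum_range_sub (fun i ↦ Y i ω)]
  refine sum_congr rfl fun i hi ↦ ?_
  exact Set.indicator_of_mem (s := {ω | 0 ≤ μ[fun ω' ↦ Y (i + 1) ω' - Y i ω' | F i] ω})
    (hω i (mem_range.mp hi)) _

end DriftTruncation

theorem azuma_except_small_probability
    {Ω : Type*} {m : MeasurableSpace Ω} (μ : Measure Ω) [IsProbabilityMeasure μ]
    (F : Filtration ℕ m) (n : ℕ) (Y : ℕ → Ω → ℝ)
    (hadp : ∀ i ≤ n, StronglyMeasurable[F i] (Y i))
    (hbdd : ∀ i < n, ∀ᵐ ω ∂μ, |Y (i + 1) ω - Y i ω| ≤ 1)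
    (ε : ℝ) (hε : 0 < ε) :
    μ {ω | Y n ω ≤ Y 0 ω - ε} ≤
      ENNReal.ofReal (Real.exp (-ε ^ 2 / (2 * n))) +
        μ (⋃ i ∈ Finset.Icc 1 n,
            {ω | (μ[fun ω' => Y i ω' - Y (i - 1) ω' | F (i - 1)]) ω < 0}) := by
  set d := driftTruncatedIncrement μ F Y
  have hΔ_meas : ∀ i < n, StronglyMeasurable[F (i + 1)] fun ω ↦ Y (i + 1) ω - Y i ω :=
    fun i hi ↦ (hadp (i + 1) hi).sub ((hadp i hi.le).mono (F.mono i.le_succ))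
  have hΔ_int : ∀ i < n, Integrable (fun ω ↦ Y (i + 1) ω - Y i ω) μ := fun i hi ↦
    .of_bound ((hΔ_meas i hi).mono (F.le _)).aestronglyMeasurable 1
      (by simpa only [norm_eq_abs] using hbdd i hi)
  have htail := measureReal_sum_range_le_neg_le (μ := μ) (F := F) (d := d)
    (fun i hi ↦ stronglyMeasurable_driftTruncatedIncrement (hΔ_meas i hi))
    (fun i hi ↦ (hbdd i hi).mono fun ω hω ↦ (abs_driftTruncatedIncrement_le ω).trans hω)
    (fun i hi ↦ condExp_driftTruncatedIncrement_nonneg (hΔ_int i hi)) hε.le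
  set D := ⋃ i ∈ Finset.Icc 1 n, {ω | (μ[fun ω' => Y i ω' - Y (i - 1) ω' | F (i - 1)]) ω < 0}
  have hcover : {ω | Y n ω ≤ Y 0 ω - ε} ⊆ {ω | ∑ i ∈ range n, d i ω ≤ -ε} ∪ D := by
    intro ω hω
    by_cases hbad : ω ∈ D
    · exact Or.inr hbad
    have hdrift : ∀ i < n, 0 ≤ μ[fun ω' ↦ Y (i + 1) ω' - Y i ω' | F i] ω := fun i hi ↦
      not_lt.mp fun hneg ↦ hbad (Set.mem_biUnion (mem_Icc.mpr ⟨by omega, hi⟩) hneg)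
    left
    simp only [Set.mem_ofPred_eq, d, sum_range_driftTruncatedIncrement hdrift] at hω ⊢
    linarith
  calc μ {ω | Y n ω ≤ Y 0 ω - ε} ≤ μ {ω | ∑ i ∈ range n, d i ω ≤ -ε} + μ D :=
        (measure_mono hcover).trans (measure_union_le _ _)
    _ ≤ ENNReal.ofReal (exp (-ε ^ 2 / (2 * n))) + μ D := by
        gcongr
        rw [← ofReal_measureReal]
        exact ENNReal.ofReal_le_ofReal htail
end

section
/- Let n ≥ 1, let Q be a real number and R a complex number with Q² ≤ 1/(100n) and |R| ≤ 1/(100n). Then both |1 − (1 − Q + R)^n / exp(−nQ)| ≤ 40·n·(Q² + |R|) and |1 − exp(−nQ)/(1 − Q + R)^n| ≤ 40·n·(Q² + |R|). -/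
/-!
Put `u = (1 - Q + R) e^Q`, so that the two quotients are `u^n` and `u^{-n}`. Since
`1 - Q² ≤ (1 - Q) e^Q ≤ 1`, we get `‖u - 1‖ ≤ 2 (Q² + ‖R‖)`; then `‖u^n - 1‖ ≤ (1 + ‖u - 1‖)^n - 1
≤ e^{n‖u - 1‖} - 1 ≤ 4 n (Q² + ‖R‖)`, which is small, so inverting `u^n` costs at most a factor 2.
-/

open Real

theorem abs_one_sub_mul_exp_sub_one_le {Q : ℝ} (hQ : Q ≤ 1) :
    |(1 - Q) * exp Q - 1| ≤ Q ^ 2 := by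
  have hneg : 1 - Q ≤ exp (-Q) := by linarith [add_one_le_exp (-Q)]
  have hpos : 1 + Q ≤ exp Q := by linarith [add_one_le_exp Q]
  have hinv : exp (-Q) * exp Q = 1 := by rw [← exp_add, neg_add_cancel, exp_zero]
  have hexp : 0 < exp Q := exp_pos Q
  rw [abs_le]
  constructor <;> nlinarith

theorem norm_one_sub_add_mul_exp_sub_one_le {Q : ℝ} (R : ℂ) (hQ : Q ≤ 1 / 2) :
    ‖(1 - Q + R) * (exp Q : ℂ) - 1‖ ≤ 2 * (Q ^ 2 + ‖R‖) := by
  have hscalar := abs_one_sub_mul_exp_sub_one_le (hQ.trans (by norm_num))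
  have hexp : exp Q ≤ 2 := by
    have := add_one_le_exp (-Q)
    have hinv : exp (-Q) * exp Q = 1 := by rw [← exp_add, neg_add_cancel, exp_zero]
    nlinarith [exp_pos Q]
  have hsplit : (1 - Q + R) * (exp Q : ℂ) - 1 = (((1 - Q) * exp Q - 1 : ℝ) : ℂ) + R * exp Q := by
    push_cast; ring
  calc ‖(1 - Q + R) * (exp Q : ℂ) - 1‖
      ≤ |(1 - Q) * exp Q - 1| + ‖R‖ * exp Q := by
        rw [hsplit]
        refine (norm_add_le _ _).trans_eq ?_
        rw [norm_mul, Complex.norm_real, Complex.norm_real, norm_eq_abs, norm_eq_abs,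
          abs_of_pos (exp_pos Q)]
    _ ≤ Q ^ 2 + ‖R‖ * 2 := by gcongr
    _ ≤ 2 * (Q ^ 2 + ‖R‖) := by nlinarith [sq_nonneg Q]

theorem norm_pow_sub_one_le {A : Type*} [NormedRing A] [NormOneClass A] (z : A) (n : ℕ) :
    ‖z ^ n - 1‖ ≤ (1 + ‖z - 1‖) ^ n - 1 := by
  have hz : ‖z‖ ≤ 1 + ‖z - 1‖ := by
    simpa [add_comm] using norm_le_norm_add_norm_sub' z 1
  induction n with
  | zero => simp
  | succ n ih =>
    have hrec : z ^ (n + 1) - 1 = z * (z ^ n - 1) + (z - 1) := by rw [pow_succ', mul_sub, mul_one]; abel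
    calc ‖z ^ (n + 1) - 1‖ ≤ ‖z‖ * ‖z ^ n - 1‖ + ‖z - 1‖ := by
          rw [hrec]; exact (norm_add_le _ _).trans (by gcongr; exact norm_mul_le _ _)
      _ ≤ (1 + ‖z - 1‖) * ((1 + ‖z - 1‖) ^ n - 1) + ‖z - 1‖ := by gcongr
      _ = (1 + ‖z - 1‖) ^ (n + 1) - 1 := by ring

theorem norm_pow_sub_one_le_two_mul {A : Type*} [NormedRing A] [NormOneClass A] (z : A) {n : ℕ}
    (hz : n * ‖z - 1‖ ≤ 1) : ‖z ^ n - 1‖ ≤ 2 * n * ‖z - 1‖ := by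
  have hexp : (1 + ‖z - 1‖) ^ n ≤ exp (n * ‖z - 1‖) := by
    rw [exp_nat_mul]
    gcongr
    linarith [add_one_le_exp ‖z - 1‖]
  have hpos : 0 ≤ n * ‖z - 1‖ := by positivity
  have := abs_exp_sub_one_le (x := n * ‖z - 1‖) (by rwa [abs_of_nonneg hpos])
  rw [abs_of_nonneg hpos, abs_le] at this
  linarith [norm_pow_sub_one_le z n]

theorem norm_one_sub_inv_le {K : Type*} [NormedField K] {w : K} (hw : ‖w - 1‖ ≤ 1 / 2) :
    ‖1 - w⁻¹‖ ≤ 2 * ‖w - 1‖ := by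
  have hw' : 1 / 2 ≤ ‖w‖ := by
    have := norm_sub_norm_le (1 : K) (1 - w)
    rw [norm_one, sub_sub_cancel, norm_sub_rev] at this
    linarith
  have hne : w ≠ 0 := norm_pos_iff.mp (by linarith)
  rw [show 1 - w⁻¹ = (w - 1) / w by field_simp, norm_div, div_le_iff₀ (by linarith)]
  nlinarith [norm_nonneg (w - 1)]

theorem exp_nQ_approx_general (n : ℕ) (Q : ℝ) (R : ℂ)
    (hQ : Q ^ 2 ≤ 1 / (100 * n)) (hR : ‖R‖ ≤ 1 / (100 * n)) :
    ‖1 - (1 - (Q : ℂ) + R) ^ n / (Real.exp (-(n : ℝ) * Q) : ℂ)‖ ≤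
        40 * n * (Q ^ 2 + ‖R‖) ∧
      ‖1 - (Real.exp (-(n : ℝ) * Q) : ℂ) / (1 - (Q : ℂ) + R) ^ n‖ ≤
        40 * n * (Q ^ 2 + ‖R‖) := by
  obtain rfl | hn := n.eq_zero_or_pos
  · simp
  set u : ℂ := (1 - Q + R) * exp Q
  have hexp : (exp (-(n : ℝ) * Q) : ℂ) = ((exp Q : ℂ) ^ n)⁻¹ := by
    rw [neg_mul, exp_neg, exp_nat_mul]; push_cast; rfl
  have hforward : (1 - (Q : ℂ) + R) ^ n / (exp (-(n : ℝ) * Q) : ℂ) = u ^ n := by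
    rw [hexp, div_inv_eq_mul, mul_pow]
  have hbackward : (exp (-(n : ℝ) * Q) : ℂ) / (1 - (Q : ℂ) + R) ^ n = (u ^ n)⁻¹ := by
    rw [hexp, mul_pow, mul_inv_rev, div_eq_mul_inv]
  have hn1 : (1 : ℝ) ≤ n := by exact_mod_cast hn
  rw [le_div_iff₀ (by positivity)] at hQ hR
  have hnD : n * (Q ^ 2 + ‖R‖) ≤ 1 / 50 := by nlinarith
  have hu : ‖u - 1‖ ≤ 2 * (Q ^ 2 + ‖R‖) := norm_one_sub_add_mul_exp_sub_one_le R (by nlinarith)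
  have hun : ‖u ^ n - 1‖ ≤ 4 * n * (Q ^ 2 + ‖R‖) :=
    calc ‖u ^ n - 1‖ ≤ 2 * n * ‖u - 1‖ := norm_pow_sub_one_le_two_mul u (by nlinarith)
      _ ≤ 2 * n * (2 * (Q ^ 2 + ‖R‖)) := by gcongr
      _ = 4 * n * (Q ^ 2 + ‖R‖) := by ring
  have hnD_nonneg : 0 ≤ n * (Q ^ 2 + ‖R‖) := by positivity
  constructor
  · rw [hforward, norm_sub_rev]
    linarith
  · rw [hbackward]
    exact (norm_one_sub_inv_le (by linarith)).trans (by linarith)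

theorem exp_nQ_approx (n : ℕ) (hn : 1 ≤ n) (Q : ℝ) (R : ℂ)
    (hQ : Q ^ 2 ≤ 1 / (100 * n)) (hR : ‖R‖ ≤ 1 / (100 * n)) :
    ‖1 - (1 - (Q : ℂ) + R) ^ n / (Real.exp (-(n : ℝ) * Q) : ℂ)‖ ≤
        40 * n * (Q ^ 2 + ‖R‖) ∧
      ‖1 - (Real.exp (-(n : ℝ) * Q) : ℂ) / (1 - (Q : ℂ) + R) ^ n‖ ≤
        40 * n * (Q ^ 2 + ‖R‖) :=
  exp_nQ_approx_general n Q R hQ hR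
end

section
/- For every choice of n-sided dice A and B with faces in [0,n] and all real numbers α, β, γ with γ ≠ α + β: |f̂(α,β,γ)| ≤ 1/|γ − α − β|. -/
open MeasureTheory Set

/-- `g_A(x) = |{i : a_i ≤ x}| - x` for a die with faces in `[0,n]`. -/
noncomputable def gDie (n : ℕ) (A : Fin n → ℝ) (x : ℝ) : ℝ :=
  ((Finset.univ.filter fun i => A i ≤ x).card : ℝ) - x

/-- `e(x) = exp(2πix)`. -/
noncomputable def eFun (x : ℝ) : ℂ := Complex.exp (2 * Real.pi * Complex.I * x)

/-- The characteristic function `f̂(α,β,γ) = E[e(α g_A(V) + β g_B(V) + γ (V - n/2))]`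
with `V` uniform on `[0,n]`. -/
noncomputable def fhat (n : ℕ) (A B : Fin n → ℝ) (α β γ : ℝ) : ℂ :=
  (n : ℂ)⁻¹ *
    ∫ t in Set.Icc (0 : ℝ) (n : ℝ),
      eFun (α * gDie n A t + β * gDie n B t + γ * (t - (n : ℝ) / 2))

/-! With `c = γ - α - β`, the integrand of `f̂` is `h t * e(c t)`, where
`h t = e(α #{i | a_i ≤ t} + β #{i | b_i ≤ t} - γ n / 2)` has modulus one and is constant between
consecutive faces of `A` and `B`. Hence `[0, n]` splits into at most `2n + 1` intervals, on each of
which the integral has modulus at most `1 / (π |c|)`; dividing by `n` and using `2n + 1 ≤ π n`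
gives the bound. -/

lemma eFun_add (x y : ℝ) : eFun (x + y) = eFun x * eFun y := by
  simp only [eFun, Complex.ofReal_add, mul_add, Complex.exp_add]

lemma norm_eFun (x : ℝ) : ‖eFun x‖ = 1 := by
  simp [eFun, Complex.norm_exp]

lemma continuous_eFun : Continuous eFun := by
  unfold eFun; fun_prop

lemma integral_eFun_mul {c : ℝ} (hc : c ≠ 0) (u v : ℝ) :
    ∫ t in u..v, eFun (c * t) = (eFun (c * v) - eFun (c * u)) / (2 * Real.pi * Complex.I * c) := by
  have hc' : (2 * Real.pi * Complex.I * c : ℂ) ≠ 0 := by simp [Real.pi_ne_zero, hc]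
  simp only [eFun, Complex.ofReal_mul, ← mul_assoc]
  exact integral_exp_mul_complex hc'

lemma norm_integral_eFun_mul_le {c : ℝ} (hc : c ≠ 0) (u v : ℝ) :
    ‖∫ t in u..v, eFun (c * t)‖ ≤ 1 / (Real.pi * |c|) := by
  have hnum : ‖eFun (c * v) - eFun (c * u)‖ ≤ 2 :=
    (norm_sub_le _ _).trans (by rw [norm_eFun, norm_eFun]; norm_num)
  have hden : ‖(2 * Real.pi * Complex.I * c : ℂ)‖ = 2 * (Real.pi * |c|) := by
    simp [abs_of_pos Real.pi_pos, mul_assoc]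
  have hpc : 0 < Real.pi * |c| := by positivity
  rw [integral_eFun_mul hc, norm_div, hden, div_le_div_iff₀ (by positivity) hpc]
  nlinarith

lemma intervalIntegrable_mul_eFun {h : ℝ → ℂ} (h_meas : AEStronglyMeasurable h)
    (h_le : ∀ t, ‖h t‖ ≤ 1) (c u v : ℝ) :
    IntervalIntegrable (fun t => h t * eFun (c * t)) volume u v := by
  refine IntervalIntegrable.mono_fun' (g := fun _ => 1) intervalIntegrable_const ?_ ?_
  · exact (h_meas.mul (continuous_eFun.comp (continuous_const_mul c)).aestronglyMeasurable).restrict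
  · exact Filter.Eventually.of_forall fun t => by simpa [norm_eFun] using h_le t

section Stepwise

variable {c : ℝ} {h : ℝ → ℂ}

lemma norm_integral_mul_eFun_le_of_const (hc : c ≠ 0) (h_le : ∀ t, ‖h t‖ ≤ 1) {u v : ℝ}
    (huv : u ≤ v) (h_const : ∀ s ∈ Ioo u v, ∀ t ∈ Ioo u v, h s = h t) :
    ‖∫ t in u..v, h t * eFun (c * t)‖ ≤ 1 / (Real.pi * |c|) := by
  rcases huv.eq_or_lt with rfl | huv
  · simp only [intervalIntegral.integral_same, norm_zero]
    positivity
  have hmid : (u + v) / 2 ∈ Ioo u v := ⟨by linarith, by linarith⟩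
  rw [intervalIntegral.integral_congr_Ioo_of_le huv.le
      (g := fun t => h ((u + v) / 2) * eFun (c * t)) fun t ht => by rw [h_const t ht _ hmid],
    intervalIntegral.integral_const_mul, norm_mul]
  calc ‖h ((u + v) / 2)‖ * ‖∫ t in u..v, eFun (c * t)‖ ≤ 1 * (1 / (Real.pi * |c|)) := by
        gcongr
        exacts [h_le _, norm_integral_eFun_mul_le hc u v]
    _ = 1 / (Real.pi * |c|) := one_mul _

theorem norm_integral_mul_eFun_le_of_stepwise (hc : c ≠ 0) (h_meas : AEStronglyMeasurable h)
    (h_le : ∀ t, ‖h t‖ ≤ 1) (S : Finset ℝ) {u v : ℝ} (huv : u ≤ v)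
    (h_step : ∀ s ∈ Ioo u v, ∀ t ∈ Ioo u v, (∀ x ∈ S, x ∉ uIoc s t) → h s = h t) :
    ‖∫ t in u..v, h t * eFun (c * t)‖ ≤ (S.card + 1) / (Real.pi * |c|) := by
  -- Induct on `S` through its largest point `a`: to the right of `a`, `h` is constant.
  induction S using Finset.induction_on_max generalizing u v with
  | empty =>
    simpa using norm_integral_mul_eFun_le_of_const hc h_le huv fun s hs t ht =>
      h_step s hs t ht (by simp)
  | insert a S hlt ih =>
    have hsub : ∀ {p q s t : ℝ}, s ∈ Ioo p q → t ∈ Ioo p q → uIoc s t ⊆ Ioo p q :=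
      fun hs ht => uIoc_subset_uIcc.trans (ordConnected_Ioo.uIcc_subset hs ht)
    rw [Finset.card_insert_of_notMem fun ha => (hlt a ha).false, Nat.cast_succ]
    by_cases ha : a ∈ Ioo u v
    · have h_left := ih ha.1.le fun s hs t ht hS => h_step s ⟨hs.1, hs.2.trans ha.2⟩
        t ⟨ht.1, ht.2.trans ha.2⟩ <| Finset.forall_mem_insert .. |>.2
          ⟨fun hat => (hsub hs ht hat).2.false, hS⟩
      have h_right := norm_integral_mul_eFun_le_of_const hc h_le ha.2.le fun s hs t ht =>
        h_step s ⟨ha.1.trans hs.1, hs.2⟩ t ⟨ha.1.trans ht.1, ht.2⟩ fun x hx hxst =>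
          (Finset.mem_insert.1 hx).elim (fun hxa => (hsub hs ht hxst).1.ne' hxa)
            fun hxS => ((hlt x hxS).trans (hsub hs ht hxst).1).false
      have hint := intervalIntegrable_mul_eFun h_meas h_le c
      rw [← intervalIntegral.integral_add_adjacent_intervals (hint u a) (hint a v)]
      calc _ ≤ _ := norm_add_le _ _
        _ ≤ (S.card + 1) / (Real.pi * |c|) + 1 / (Real.pi * |c|) := add_le_add h_left h_right
        _ = _ := by ring
    · calc _ ≤ (S.card + 1) / (Real.pi * |c|) := ih huv fun s hs t ht hS => h_step s hs t ht <|
            Finset.forall_mem_insert .. |>.2 ⟨fun hat => ha (hsub hs ht hat), hS⟩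
        _ ≤ _ := by gcongr; linarith

end Stepwise

section CountLE

variable {ι : Type*} [Fintype ι]

noncomputable def countLE (f : ι → ℝ) (x : ℝ) : ℝ :=
  ((Finset.univ.filter fun i => f i ≤ x).card : ℝ)

@[fun_prop]
lemma measurable_countLE (f : ι → ℝ) : Measurable (countLE f) :=
  Monotone.measurable fun _ _ hxy => Nat.mono_cast <|
    Finset.card_le_card <| Finset.monotone_filter_right _ fun _ _ hi => hi.trans hxy

lemma countLE_eq_of_notMem_uIoc {f : ι → ℝ} {s t : ℝ} (hf : ∀ i, f i ∉ uIoc s t) :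
    countLE f s = countLE f t := by
  have hst : ∀ i, s < f i ↔ t < f i := fun i => by
    have := hf i
    rw [mem_uIoc] at this
    grind
  simp only [countLE, ← not_lt, hst]

end CountLE

lemma gDie_eq_countLE_sub (n : ℕ) (A : Fin n → ℝ) (x : ℝ) : gDie n A x = countLE A x - x := rfl

lemma fhat_eq_integral_mul_eFun (n : ℕ) (A B : Fin n → ℝ) (α β γ : ℝ) :
    fhat n A B α β γ = (n : ℂ)⁻¹ * ∫ t in (0 : ℝ)..n,
      eFun (α * countLE A t + β * countLE B t - γ * (n / 2)) * eFun ((γ - α - β) * t) := by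
  rw [fhat, integral_Icc_eq_integral_Ioc, ← intervalIntegral.integral_of_le (Nat.cast_nonneg _)]
  congr 1
  refine intervalIntegral.integral_congr fun t _ => ?_
  rw [← eFun_add, gDie_eq_countLE_sub, gDie_eq_countLE_sub]
  ring_nf

theorem fhat_large_gamma_bound_general (n : ℕ) (A B : Fin n → ℝ)
    (α β γ : ℝ) (h : γ ≠ α + β) :
    ‖fhat n A B α β γ‖ ≤ 1 / |γ - α - β| := by
  have hc : γ - α - β ≠ 0 := by contrapose! h; linarith
  rcases n.eq_zero_or_pos with rfl | hn
  · simp [fhat]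
  set S := Finset.univ.image A ∪ Finset.univ.image B
  have hS : (S.card : ℝ) ≤ 2 * n := by
    have hA := (Finset.card_image_le (s := Finset.univ) (f := A)).trans_eq (Finset.card_fin n)
    have hB := (Finset.card_image_le (s := Finset.univ) (f := B)).trans_eq (Finset.card_fin n)
    exact_mod_cast ((Finset.card_union_le _ _).trans (add_le_add hA hB)).trans_eq (two_mul n).symm
  have h_step : ∀ s ∈ Ioo (0 : ℝ) n, ∀ t ∈ Ioo (0 : ℝ) n, (∀ x ∈ S, x ∉ uIoc s t) →
      eFun (α * countLE A s + β * countLE B s - γ * (n / 2)) =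
        eFun (α * countLE A t + β * countLE B t - γ * (n / 2)) := fun s _ t _ hgap => by
    rw [countLE_eq_of_notMem_uIoc (f := A) fun i => hgap _ (by simp [S]),
      countLE_eq_of_notMem_uIoc (f := B) fun i => hgap _ (by simp [S])]
  have h_int := norm_integral_mul_eFun_le_of_stepwise hc
    (continuous_eFun.measurable.comp (by fun_prop)).aestronglyMeasurable
    (fun _ => (norm_eFun _).le) S (Nat.cast_nonneg n) h_step
  have hn' : (1 : ℝ) ≤ n := by exact_mod_cast hn
  rw [fhat_eq_integral_mul_eFun, norm_mul, norm_inv, Complex.norm_natCast]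
  calc _ ≤ (n : ℝ)⁻¹ * ((2 * n + 1) / (Real.pi * |γ - α - β|)) := by
        gcongr
        exact h_int.trans (by gcongr)
    _ ≤ (n : ℝ)⁻¹ * (Real.pi * n / (Real.pi * |γ - α - β|)) := by
        gcongr
        nlinarith [Real.pi_gt_three]
    _ = 1 / |γ - α - β| := by field_simp

theorem fhat_large_gamma_bound (n : ℕ) (A B : Fin n → ℝ)
    (hA : ∀ i, A i ∈ Set.Icc (0 : ℝ) (n : ℝ)) (hB : ∀ i, B i ∈ Set.Icc (0 : ℝ) (n : ℝ))
    (α β γ : ℝ) (h : γ ≠ α + β) :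
    ‖fhat n A B α β γ‖ ≤ 1 / |γ - α - β| :=
  fhat_large_gamma_bound_general n A B α β γ h
end
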